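/- Let ∼ be the congruence on {a,b,c,0,1}* generated by the equation xxx = xx (i.e. uwwwv ∼ uwwv for all words u, v, w). Then the regular language L = Γ*0Γ*1, where Γ = {a,b,c}, is closed under ∼: if u0v1 ∼ w with u, v ∈ Γ*, then w ∈ Γ*0Γ*1. -/
import Mathlib


/-- The congruence on words generated by the equation `www = ww` (rewriting in any
context), i.e. the smallest equivalence relation with `u(www)v ∼ u(ww)v`. -/
inductive Sim {α : Type} : List α → List α → Prop where
  | base (u v w : List α) : Sim (u ++ (w ++ w ++ w) ++ v) (u ++ (w ++ w) ++ v)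
  | refl (t : List α) : Sim t t
  | symm {s t : List α} : Sim s t → Sim t s
  | trans {s t u : List α} : Sim s t → Sim t u → Sim s u

/-- A word is square-free if it contains no nonempty factor of the form `xx`. -/
def SqFree {α : Type} (w : List α) : Prop :=
  ¬ ∃ u x v : List α, x ≠ [] ∧ w = u ++ (x ++ x) ++ v

/-- The five-letter alphabet Σ = {a, b, c, 0, 1}. -/
inductive Letter5 : Type where
  | a | b | c | zero | one
deriving DecidableEq

/-- A letter of `Letter5` belongs to Γ = {a,b,c}. -/
def Letter5.isG : Letter5 → Prop
  | .a => True
  | .b => True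
  | .c => True
  | _ => False

/-- The invariant: exactly one `0`, exactly one `1`, and the word ends with `1`. -/
def QInv (w : List Letter5) : Prop :=
  w.count .one = 1 ∧ w.count .zero = 1 ∧ w.getLast? = some .one

lemma last_base (u v w : List Letter5) :
    (u ++ (w ++ w ++ w) ++ v).getLast? = (u ++ (w ++ w) ++ v).getLast? := by
  rcases eq_or_ne v [] with rfl | hv
  · rcases eq_or_ne w [] with rfl | hw
    · simp
    · simp only [List.append_nil, ← List.append_assoc]
      rw [List.getLast?_append_of_ne_nil _ hw, List.getLast?_append_of_ne_nil _ hw]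
  · rw [List.getLast?_append_of_ne_nil _ hv, List.getLast?_append_of_ne_nil _ hv]

lemma count_base (ch : Letter5) (u v w : List Letter5) :
    (u ++ (w ++ w ++ w) ++ v).count ch = 1 ↔ (u ++ (w ++ w) ++ v).count ch = 1 := by
  simp only [List.count_append]; omega

lemma q_base (u v w : List Letter5) :
    QInv (u ++ (w ++ w ++ w) ++ v) ↔ QInv (u ++ (w ++ w) ++ v) := by
  unfold QInv
  rw [last_base, count_base, count_base]

lemma q_sim {s t : List Letter5} (h : Sim s t) : QInv s ↔ QInv t := by
  induction h with
  | base u v w => exact q_base u v w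
  | refl t => rfl
  | symm _ ih => exact ih.symm
  | trans _ _ ih1 ih2 => exact ih1.trans ih2

lemma isG_ne {x : Letter5} (h : x.isG) : x ≠ .zero ∧ x ≠ .one := by
  cases x <;> simp_all [Letter5.isG]

/-- the language Γ*0Γ*1 is closed under the congruence generated by
`xxx = xx`. -/
theorem lang_G0G1_closed_under_sim (u v : List Letter5) (w : List Letter5)
    (hu : ∀ x ∈ u, x.isG) (hv : ∀ x ∈ v, x.isG)
    (hsim : Sim (u ++ [Letter5.zero] ++ v ++ [Letter5.one]) w) :
    ∃ u' v' : List Letter5, (∀ x ∈ u', x.isG) ∧ (∀ x ∈ v', x.isG) ∧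
      w = u' ++ [Letter5.zero] ++ v' ++ [Letter5.one] := by
  have hQs : QInv (u ++ [Letter5.zero] ++ v ++ [Letter5.one]) := by
    have h1u : Letter5.one ∉ u := fun h => (isG_ne (hu _ h)).2 rfl
    have h1v : Letter5.one ∉ v := fun h => (isG_ne (hv _ h)).2 rfl
    have h0u : Letter5.zero ∉ u := fun h => (isG_ne (hu _ h)).1 rfl
    have h0v : Letter5.zero ∉ v := fun h => (isG_ne (hv _ h)).1 rfl
    refine ⟨?_, ?_, ?_⟩
    · simp [List.count_append, List.count_eq_zero.mpr h1u, List.count_eq_zero.mpr h1v]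
    · simp [List.count_append, List.count_eq_zero.mpr h0u, List.count_eq_zero.mpr h0v]
    · rw [List.getLast?_append_of_ne_nil _ (by simp : ([Letter5.one] : List Letter5) ≠ [])]
      rfl
  have hQw : QInv w := (q_sim hsim).mp hQs
  obtain ⟨h1, h0, hlast⟩ := hQw
  -- w ends with `one`
  obtain ⟨w', hw'⟩ : ∃ w', w = w' ++ [Letter5.one] := by
    rcases w.eq_nil_or_concat with rfl | ⟨w', x, rfl⟩
    · simp at hlast
    · refine ⟨w', ?_⟩
      rw [List.concat_eq_append] at hlast ⊢
      rw [List.getLast?_append_of_ne_nil _ (by simp)] at hlast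
      simp_all
  subst hw'
  have h1w' : (w'.count Letter5.one) = 0 := by
    simp [List.count_append] at h1; omega
  have h0w' : (w'.count Letter5.zero) = 1 := by
    simpa [List.count_append] using h0
  have hmem : Letter5.zero ∈ w' := by
    rw [← List.count_pos_iff]; omega
  obtain ⟨u', v', rfl⟩ := List.append_of_mem hmem
  have h0u' : Letter5.zero ∉ u' ∧ Letter5.zero ∉ v' := by
    simp [List.count_append] at h0w'
    constructor <;> rw [← List.count_eq_zero] <;> omega
  have h1u' : Letter5.one ∉ u' ∧ Letter5.one ∉ v' := by
    simp [List.count_append] at h1w'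
    constructor <;> rw [← List.count_eq_zero] <;> omega
  refine ⟨u', v', ?_, ?_, by simp⟩
  · intro x hx
    have hx0 : x ≠ Letter5.zero := fun h => h0u'.1 (h ▸ hx)
    have hx1 : x ≠ Letter5.one := fun h => h1u'.1 (h ▸ hx)
    cases x <;> simp_all [Letter5.isG]
  · intro x hx
    have hx0 : x ≠ Letter5.zero := fun h => h0u'.2 (h ▸ hx)
    have hx1 : x ≠ Letter5.one := fun h => h1u'.2 (h ▸ hx)
    cases x <;> simp_all [Letter5.isG]
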